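/- arXiv:1808.10321 — 3 statements merged into one kernel-verified Lean document; each statement's English description precedes it below -/
import Mathlib

section
/- Let L be the Niemeier lattice A_24, generated by the root lattice A_24 = {x ∈ ℤ^{25} : Σx_i = 0} and the glue vector g = (1/5^{20}, -4/5^5). Then w = (1^4, -1^4, 0^{17}) ∈ L has norm 8, is extremal, and the number of roots u ∈ L with u·w = -2 equals 16. -/
/-- The standard inner product on `ℚ^25`. -/
def qip (x y : Fin 25 → ℚ) : ℚ := ∑ i, x i * y i

/-- A rational vector with all coordinates integral. -/
def isIntVec (x : Fin 25 → ℚ) : Prop := ∀ i, ∃ m : ℤ, x i = (m : ℚ)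

/-- The root lattice `A_24` inside `ℚ^25`: integer vectors with coordinate sum zero. -/
def A24set : Set (Fin 25 → ℚ) := {x | isIntVec x ∧ (∑ i, x i) = 0}

/-- The glue vector `g = (1/5^20, -4/5^5)`. -/
def glueA24 : Fin 25 → ℚ := fun i => if i.val < 20 then 1 / 5 else -(4 / 5)

/-- The Niemeier lattice `A_24`. -/
def NiemeierA24 : AddSubgroup (Fin 25 → ℚ) :=
  AddSubgroup.closure (A24set ∪ {glueA24})

/-- The vector `w = (1^4, -1^4, 0^17)`. -/
def wA24 : Fin 25 → ℚ := fun i => if i.val < 4 then 1 else if i.val < 8 then -1 else 0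

/-!
Every vector of `L` has coordinate sum `0` and all its coordinates in one coset `r + ℤ`, with
`r ∈ {0, 1/5, …, 4/5}`. Since the coordinates sum to `0`, pointwise bounds `uᵢ² + s uᵢ ≥ cᵢ`
add up to `|u|² ≥ ∑ cᵢ`; with `s = 1 - 2r`, the bound `(uᵢ - r)(uᵢ - r + 1) ≥ 0` on `r + ℤ` gives
`|u|² ≥ 25 r (1 - r) ≥ 4` when `r ≠ 0`. So the roots of `L` are the `e_p - e_q`, and those with
`u·w = -2` are the `16` with `w_p = -1`, `w_q = 1`. Extremality reduces, via
`|w + 2u|² = |w|² + 4 (u·u + u·w)`, to `u·u + u·w ≥ 0`, which is clear for integral `u` and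
follows from bounds of the same kind when `r ≠ 0`.
-/

open Finset Matrix

section OrderedField

variable {K : Type*} [Field K] [LinearOrder K] [IsStrictOrderedRing K]

theorem mul_sub_nonneg_of_eq_add_intCast_mul {x a b d : K} {m : ℤ} (hx : x = a + m * d)
    (hab : |b - a| ≤ d) : 0 ≤ (x - a) * (x - b) := by
  obtain ⟨hba, hab⟩ := abs_le.mp hab
  obtain hm | rfl | hm : m ≤ -1 ∨ m = 0 ∨ 1 ≤ m := by omega
  · have hm : (m : K) ≤ -1 := by exact_mod_cast hm
    apply mul_nonneg_of_nonpos_of_nonpos <;> nlinarith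
  · simp [hx]
  · have hm : (1 : K) ≤ m := by exact_mod_cast hm
    apply mul_nonneg <;> nlinarith

theorem mul_one_sub_le_mul_self_add_mul {x r : K} {m : ℤ} (hx : x = m + r) :
    r * (1 - r) ≤ x * x + (1 - 2 * r) * x := by
  have := mul_sub_nonneg_of_eq_add_intCast_mul (b := r - 1) (d := 1) (show x = r + m * 1 by
    rw [hx]; ring) (by simp)
  nlinarith

variable {ι : Type*} [Fintype ι]

theorem sum_le_sum_of_le_add_mul {c f v : ι → K} (s : K) (hv : ∑ i, v i = 0)
    (h : ∀ i, c i ≤ f i + s * v i) : ∑ i, c i ≤ ∑ i, f i :=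
  calc ∑ i, c i ≤ ∑ i, (f i + s * v i) := sum_le_sum fun i _ => h i
    _ = ∑ i, f i := by rw [sum_add_distrib, ← mul_sum, hv, mul_zero, add_zero]

theorem card_mul_le_dotProduct_self {u : ι → K} {r : K} (hu : ∑ i, u i = 0)
    (hr : ∀ i, ∃ m : ℤ, u i = m + r) : Fintype.card ι * (r * (1 - r)) ≤ u ⬝ᵥ u := by
  have key := sum_le_sum_of_le_add_mul (c := fun _ => r * (1 - r)) (f := fun i => u i * u i)
    (1 - 2 * r) hu fun i => mul_one_sub_le_mul_self_add_mul (hr i).choose_spec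
  simpa [dotProduct] using key

end OrderedField

section Roots

variable {K ι : Type*} [Field K] [DecidableEq ι]

def rootVec (p q : ι) : ι → K := Pi.single p 1 - Pi.single q 1

theorem rootVec_apply_left {p q : ι} (hpq : p ≠ q) : rootVec (K := K) p q p = 1 := by
  simp [rootVec, hpq.symm]

theorem rootVec_apply_right {p q : ι} (hpq : p ≠ q) : rootVec (K := K) p q q = -1 := by
  simp [rootVec, hpq]

theorem rootVec_injOn [CharZero K] :
    Set.InjOn (fun pq : ι × ι => rootVec (K := K) pq.1 pq.2) {pq | pq.1 ≠ pq.2} := by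
  rintro ⟨p, q⟩ hpq ⟨p', q'⟩ hpq' h
  have hp := rootVec_apply_left (K := K) hpq
  have hq := rootVec_apply_right (K := K) hpq
  simp only at h
  rw [h] at hp hq
  simp only [rootVec, Pi.sub_apply, Pi.single_apply] at hp hq
  simp only [Prod.mk.injEq]
  -- only the swap `(p', q') = (q, p)` survives the case split, and `(-1 : K) ≠ 1` rules it out
  split_ifs at hp hq <;> simp_all; norm_num at hp

variable [Fintype ι]

theorem rootVec_dotProduct (p q : ι) (y : ι → K) : rootVec p q ⬝ᵥ y = y p - y q := by
  simp [rootVec, sub_dotProduct]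

theorem sum_rootVec (p q : ι) : ∑ i, rootVec (K := K) p q i = 0 := by
  simpa [dotProduct] using rootVec_dotProduct (K := K) p q 1

theorem exists_eq_rootVec [LinearOrder K] [IsStrictOrderedRing K] {u : ι → K}
    (hint : ∀ i, ∃ m : ℤ, u i = m) (hsum : ∑ i, u i = 0) (hnorm : u ⬝ᵥ u = 2) :
    ∃ p q, p ≠ q ∧ u = rootVec p q := by
  have hne : u ≠ 0 := by
    rintro rfl
    simp at hnorm
  obtain ⟨p, hp⟩ : ∃ p, 0 < u p := by
    by_contra! h
    exact hne (funext fun i => (sum_eq_zero_iff_of_nonpos fun i _ => h i).1 hsum i (mem_univ i))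
  obtain ⟨q, hq⟩ : ∃ q, u q < 0 := by
    by_contra! h
    exact hne (funext fun i => (sum_eq_zero_iff_of_nonneg fun i _ => h i).1 hsum i (mem_univ i))
  have hpq : p ≠ q := by
    rintro rfl
    linarith
  have hp1 : 1 ≤ u p := by
    obtain ⟨m, hm⟩ := hint p
    rw [hm] at hp ⊢
    exact_mod_cast (Int.cast_pos.mp hp : 0 < m)
  have hq1 : u q ≤ -1 := by
    obtain ⟨m, hm⟩ := hint q
    rw [hm] at hq ⊢
    exact_mod_cast Int.le_sub_one_of_lt (Int.cast_lt_zero.mp hq : m < 0)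
  set rest := (univ.erase p).erase q
  have hsplit : u ⬝ᵥ u = u p * u p + (u q * u q + ∑ i ∈ rest, u i * u i) := by
    rw [dotProduct, ← add_sum_erase univ _ (mem_univ p),
      ← add_sum_erase _ _ (mem_erase.2 ⟨hpq.symm, mem_univ q⟩)]
  have hrest : ∑ i ∈ rest, u i * u i = 0 := by
    have := sum_nonneg fun i (_ : i ∈ rest) => mul_self_nonneg (u i)
    nlinarith
  refine ⟨p, q, hpq, funext fun i => ?_⟩
  by_cases hip : i = p
  · subst hip
    rw [rootVec_apply_left hpq]
    nlinarith
  by_cases hiq : i = q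
  · subst hiq
    rw [rootVec_apply_right hpq]
    nlinarith
  have hi : i ∈ rest := mem_erase.2 ⟨hiq, mem_erase.2 ⟨hip, mem_univ i⟩⟩
  simpa [rootVec, Pi.single_apply, hip, hiq] using
    (sum_eq_zero_iff_of_nonneg fun i _ => mul_self_nonneg (u i)).1 hrest i hi

end Roots

theorem qip_eq_dotProduct (x y : Fin 25 → ℚ) : qip x y = x ⬝ᵥ y := rfl

theorem mem_niemeierA24_of_isIntVec {x : Fin 25 → ℚ} (hx : isIntVec x) (hsum : ∑ i, x i = 0) :
    x ∈ NiemeierA24 :=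
  AddSubgroup.subset_closure (Or.inl ⟨hx, hsum⟩)

theorem sum_eq_zero_and_coset_of_mem_niemeierA24 {x : Fin 25 → ℚ} (hx : x ∈ NiemeierA24) :
    ∑ i, x i = 0 ∧ ∃ k : ℤ, ∀ i, ∃ m : ℤ, x i = m + k / 5 := by
  induction hx using AddSubgroup.closure_induction with
  | mem y hy =>
    obtain ⟨hint, hsum⟩ | rfl := hy
    · exact ⟨hsum, 0, fun i => by simpa using hint i⟩
    · refine ⟨by simp [glueA24, Fin.sum_univ_succ]; norm_num, 1, fun i => ?_⟩
      by_cases h : i.val < 20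
      · exact ⟨0, by simp [glueA24, h]⟩
      · exact ⟨-1, by simp [glueA24, h]; norm_num⟩
  | zero => exact ⟨by simp, 0, fun _ => ⟨0, by simp⟩⟩
  | add y z _ _ hy hz =>
    obtain ⟨hy, k, hk⟩ := hy
    obtain ⟨hz, l, hl⟩ := hz
    refine ⟨by simp [sum_add_distrib, hy, hz], k + l, fun i => ?_⟩
    obtain ⟨m, hm⟩ := hk i
    obtain ⟨n, hn⟩ := hl i
    exact ⟨m + n, by simp [hm, hn]; ring⟩
  | neg y _ hy =>
    obtain ⟨hy, k, hk⟩ := hy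
    refine ⟨by simp [hy], -k, fun i => ?_⟩
    obtain ⟨m, hm⟩ := hk i
    exact ⟨-m, by simp [hm]; ring⟩

theorem sum_eq_zero_and_frac_of_mem_niemeierA24 {x : Fin 25 → ℚ} (hx : x ∈ NiemeierA24) :
    ∑ i, x i = 0 ∧ ∃ r : ℚ, (r = 0 ∨ 1 / 5 ≤ r ∧ r ≤ 4 / 5) ∧ ∀ i, ∃ m : ℤ, x i = m + r := by
  obtain ⟨hsum, k, hk⟩ := sum_eq_zero_and_coset_of_mem_niemeierA24 hx
  refine ⟨hsum, (k % 5 : ℤ) / 5, ?_, fun i => ?_⟩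
  · obtain h | h | h | h | h : k % 5 = 0 ∨ k % 5 = 1 ∨ k % 5 = 2 ∨ k % 5 = 3 ∨ k % 5 = 4 := by
      omega
    all_goals rw [h]; norm_num
  · obtain ⟨m, hm⟩ := hk i
    refine ⟨m + k / 5, ?_⟩
    have hdiv : ((k % 5 : ℤ) : ℚ) + 5 * ((k / 5 : ℤ) : ℚ) = k := by
      exact_mod_cast Int.emod_add_mul_ediv k 5
    rw [hm]
    push_cast
    linarith

theorem qip_add_two_nsmul_self (x y : Fin 25 → ℚ) :
    qip (x + 2 • y) (x + 2 • y) = qip x x + 4 * (qip y y + qip y x) := by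
  simp only [qip_eq_dotProduct, two_nsmul, add_dotProduct, dotProduct_add, dotProduct_comm x y]
  ring

theorem isIntVec_wA24 : isIntVec wA24 := fun i => by
  unfold wA24
  split_ifs
  exacts [⟨1, by norm_num⟩, ⟨-1, by norm_num⟩, ⟨0, by norm_num⟩]

theorem wA24_mem_niemeierA24 : wA24 ∈ NiemeierA24 :=
  mem_niemeierA24_of_isIntVec isIntVec_wA24 (by simp [wA24, Fin.sum_univ_succ])

theorem qip_wA24_self : qip wA24 wA24 = 8 := by
  simp [qip, wA24, Fin.sum_univ_succ]
  norm_num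

theorem abs_wA24_le_one (i : Fin 25) : |wA24 i| ≤ 1 := by
  unfold wA24
  split_ifs <;> norm_num

theorem qip_self_add_qip_wA24_nonneg {u : Fin 25 → ℚ} (hu : u ∈ NiemeierA24) :
    0 ≤ qip u u + qip u wA24 := by
  obtain ⟨hsum, r, rfl | ⟨hr1, hr4⟩, hr⟩ := sum_eq_zero_and_frac_of_mem_niemeierA24 hu
  · rw [qip, qip, ← sum_add_distrib]
    refine sum_nonneg fun i _ => ?_
    obtain ⟨m, hm⟩ := hr i
    have := mul_sub_nonneg_of_eq_add_intCast_mul (a := 0) (b := -wA24 i) (d := 1)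
      (show u i = 0 + m * 1 by simp [hm]) (by simpa using abs_wA24_le_one i)
    linarith
  · let c : Fin 25 → ℚ := fun i =>
      if i.val < 4 then -(1 - r) ^ 2 else if i.val < 8 then -r ^ 2 else r * (1 - r)
    have hc : ∑ i, c i = (5 * r - 1) * (4 - 5 * r) := by
      simp only [c, Fin.sum_univ_succ]
      norm_num
      ring
    refine (hc ▸ mul_nonneg (by linarith) (by linarith)).trans ?_
    rw [qip, qip, ← sum_add_distrib]
    refine sum_le_sum_of_le_add_mul (1 - 2 * r) hsum fun i => ?_
    simp only [c, wA24]
    split_ifs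
    · nlinarith [sq_nonneg (u i + 1 - r)]
    · nlinarith [sq_nonneg (u i - r)]
    · nlinarith [mul_one_sub_le_mul_self_add_mul (hr i).choose_spec]

theorem isIntVec_of_qip_self_lt_four {u : Fin 25 → ℚ} (hu : u ∈ NiemeierA24) (h : qip u u < 4) :
    isIntVec u := by
  obtain ⟨hsum, r, rfl | ⟨hr1, hr4⟩, hr⟩ := sum_eq_zero_and_frac_of_mem_niemeierA24 hu
  · simpa [isIntVec] using hr
  · have := card_mul_le_dotProduct_self hsum hr
    rw [Fintype.card_fin, ← qip_eq_dotProduct] at this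
    norm_num at this
    nlinarith

theorem mem_niemeierA24_and_qip_self_eq_two_iff {u : Fin 25 → ℚ} :
    u ∈ NiemeierA24 ∧ qip u u = 2 ↔ ∃ p q, p ≠ q ∧ u = rootVec p q := by
  constructor
  · rintro ⟨hu, hnorm⟩
    exact exists_eq_rootVec (isIntVec_of_qip_self_lt_four hu (by linarith))
      (sum_eq_zero_and_frac_of_mem_niemeierA24 hu).1 hnorm
  · rintro ⟨p, q, hpq, rfl⟩
    refine ⟨mem_niemeierA24_of_isIntVec (fun i => ?_) (sum_rootVec p q), ?_⟩
    · simp only [rootVec, Pi.sub_apply, Pi.single_apply]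
      split_ifs
      exacts [⟨0, by norm_num⟩, ⟨1, by norm_num⟩, ⟨-1, by norm_num⟩, ⟨0, by norm_num⟩]
    · rw [qip_eq_dotProduct, rootVec_dotProduct, rootVec_apply_left hpq, rootVec_apply_right hpq]
      norm_num

theorem wA24_sub_eq_neg_two_iff (p q : Fin 25) :
    wA24 p - wA24 q = -2 ↔ 4 ≤ p.val ∧ p.val < 8 ∧ q.val < 4 := by
  unfold wA24
  split_ifs <;> norm_num <;> omega

theorem card_wA24_sub_eq_neg_two :
    Nat.card {pq : Fin 25 × Fin 25 | wA24 pq.1 - wA24 pq.2 = -2} = 16 := by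
  simp only [wA24_sub_eq_neg_two_iff]
  rw [Nat.card_eq_fintype_card, Fintype.card_ofFinset]
  rfl

theorem roots_wA24_eq_image :
    {u : Fin 25 → ℚ | u ∈ NiemeierA24 ∧ qip u u = 2 ∧ qip u wA24 = -2} =
      (fun pq : Fin 25 × Fin 25 => rootVec pq.1 pq.2) '' {pq | wA24 pq.1 - wA24 pq.2 = -2} := by
  ext u
  simp only [Set.mem_ofPred_eq, Set.mem_image, ← and_assoc, mem_niemeierA24_and_qip_self_eq_two_iff]
  constructor
  · rintro ⟨⟨p, q, -, rfl⟩, hw⟩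
    exact ⟨(p, q), by rwa [qip_eq_dotProduct, rootVec_dotProduct] at hw, rfl⟩
  · rintro ⟨⟨p, q⟩, hw, rfl⟩
    refine ⟨⟨p, q, ?_, rfl⟩, by rwa [qip_eq_dotProduct, rootVec_dotProduct]⟩
    rintro rfl
    norm_num at hw

/-- `w = (1^4, -1^4, 0^17)` lies in the Niemeier lattice `A_24`,
has norm 8, is extremal, and the number of roots `u` with `u·w = -2` equals 16. -/
theorem niemeierA24_w :
    wA24 ∈ NiemeierA24 ∧
    qip wA24 wA24 = 8 ∧
    (∀ u ∈ NiemeierA24, qip wA24 wA24 ≤ qip (wA24 + 2 • u) (wA24 + 2 • u)) ∧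
    Nat.card {u : Fin 25 → ℚ |
      u ∈ NiemeierA24 ∧ qip u u = 2 ∧ qip u wA24 = -2} = 16 := by
  refine ⟨wA24_mem_niemeierA24, qip_wA24_self, fun u hu => ?_, ?_⟩
  · rw [qip_add_two_nsmul_self]
    linarith [qip_self_add_qip_wA24_nonneg hu]
  · have hinj : Set.InjOn (fun pq : Fin 25 × Fin 25 => rootVec (K := ℚ) pq.1 pq.2)
        {pq | wA24 pq.1 - wA24 pq.2 = -2} :=
      rootVec_injOn.mono <| by
        rintro pq hw (hpq : pq.1 = pq.2)
        simp [hpq] at hw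
    rw [roots_wA24_eq_image, Nat.card_image_of_injOn hinj, card_wA24_sub_eq_neg_two]
end

section
/- The number of norm-4 vectors in the Niemeier lattice A_24 equals C(4,2)·C(25,4) + 2·C(25,5) = 75900 + 106260 = 182160, and they are exactly the vectors of type (1²,-1²,0^{21}) and ±(1/5^{20}, -4/5^5) up to permutation of coordinates. -/
/-- The template vector `(1², -1², 0^21)`. -/
def t4 : Fin 25 → ℚ := fun i => if i.val < 2 then 1 else if i.val < 4 then -1 else 0

/-!
A vector of `A_24` has coordinate sum `0` and all its coordinates in one coset `b + ℤ`,
`b = r / 5`. For an integer `n` we have `(n + 1) n ≥ 0`, so on the coset `b + ℤ^25` the norm-4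
vectors satisfy `0 ≤ ∑ (u_i - b + 1)(u_i - b) = 4 + 25 b (b - 1)`. For `r = 2, 3` the right side
is negative; for `r = 1, 4` it vanishes, forcing every coordinate into `{b - 1, b}`, which gives
`±` a permuted glue vector. For `r = 0` a coordinate with `|u_i| ≥ 2` would carry the whole norm
and leave a nonzero coordinate sum, so `u` has two entries `1` and two entries `-1`. Two vectors
with the same fibre sizes differ by a permutation of coordinates, and counting supports gives
`C(25,2) C(23,2) + 2 C(25,5) = 182160`.
-/

open Finset

section Rearrangement

variable {ι α : Type*} [Fintype ι] [DecidableEq α]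

theorem exists_perm_eq_comp_of_card_fiber_eq {u t : ι → α}
    (h : ∀ c, #{i | u i = c} = #{i | t i = c}) : ∃ σ : Equiv.Perm ι, u = t ∘ σ :=
  ⟨Equiv.ofFiberEquiv fun c =>
      Fintype.equivOfCardEq (by simpa only [Fintype.card_subtype] using h c),
    funext fun i => (Equiv.ofFiberEquiv_map _ i).symm⟩

/-- The fibre sizes add up to `card ι`, so for functions with values in `V` one fibre may be
skipped. -/
theorem exists_perm_eq_comp_of_card_fiber_eq_of_mem {u t : ι → α} {V : Finset α} (c₀ : α)
    (hu : ∀ i, u i ∈ V) (ht : ∀ i, t i ∈ V)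
    (h : ∀ c ∈ V, c ≠ c₀ → #{i | u i = c} = #{i | t i = c}) :
    ∃ σ : Equiv.Perm ι, u = t ∘ σ := by
  refine exists_perm_eq_comp_of_card_fiber_eq fun c => ?_
  by_cases hcV : c ∈ V
  swap
  · have hempty : ∀ f : ι → α, (∀ i, f i ∈ V) → #{i | f i = c} = 0 := fun f hf =>
      card_eq_zero.mpr <| filter_eq_empty_iff.mpr fun i _ hi => hcV (hi ▸ hf i)
    rw [hempty u hu, hempty t ht]
  by_cases hc : c = c₀
  swap
  · exact h c hcV hc
  subst hc
  have hsplit : ∀ f : ι → α, (∀ i, f i ∈ V) →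
      Fintype.card ι = #{i | f i = c} + ∑ d ∈ V.erase c, #{i | f i = d} := fun f hf => by
    rw [add_sum_erase V (fun d => #{i | f i = d}) hcV, ← card_univ]
    exact card_eq_sum_card_fiberwise fun i _ => hf i
  have hrest : ∑ d ∈ V.erase c, #{i | u i = d} = ∑ d ∈ V.erase c, #{i | t i = d} :=
    sum_congr rfl fun d hd => h d (mem_of_mem_erase hd) (ne_of_mem_erase hd)
  have := hsplit u hu
  have := hsplit t ht
  omega

end Rearrangement

theorem disjoint_image_image {α β γ : Type*} [DecidableEq γ] {s : Finset α} {t : Finset β}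
    {f : α → γ} {g : β → γ} (h : ∀ a b, f a ≠ g b) : Disjoint (s.image f) (t.image g) := by
  simp only [disjoint_left, mem_image]
  rintro _ ⟨a, -, rfl⟩ ⟨b, -, hb⟩
  exact h a b hb.symm

theorem ne_of_apply_mem {ι β : Type*} {f g : ι → β} {V W : Finset β} (hVW : Disjoint V W) (i : ι)
    (hf : f i ∈ V) (hg : g i ∈ W) : f ≠ g :=
  fun h => disjoint_left.mp hVW hf (h ▸ hg)

section Shapes

variable {ι : Type*} [DecidableEq ι]

def signVec (A B : Finset ι) : ι → ℚ := fun i => if i ∈ A then 1 else if i ∈ B then -1 else 0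

def glueVec (s : Finset ι) : ι → ℚ := fun i => if i ∈ s then -(4 / 5) else 1 / 5

theorem signVec_apply_mem (A B : Finset ι) (i : ι) :
    signVec A B i ∈ ({1, -1, 0} : Finset ℚ) := by
  unfold signVec; split_ifs <;> simp

theorem glueVec_apply_mem (s : Finset ι) (i : ι) :
    glueVec s i ∈ ({-(4 / 5), 1 / 5} : Finset ℚ) := by
  unfold glueVec; split_ifs <;> simp

theorem neg_glueVec_apply_mem (s : Finset ι) (i : ι) :
    -glueVec s i ∈ ({4 / 5, -(1 / 5)} : Finset ℚ) := by
  unfold glueVec; split_ifs <;> norm_num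

variable [Fintype ι]

theorem filter_signVec_eq_one (A B : Finset ι) : univ.filter (fun i => signVec A B i = 1) = A := by
  ext i; rw [mem_filter]; simp only [signVec, mem_univ, true_and]; split_ifs <;> norm_num [*]

theorem filter_signVec_eq_neg_one {A B : Finset ι} (h : Disjoint A B) :
    univ.filter (fun i => signVec A B i = -1) = B := by
  ext i; rw [mem_filter]; simp only [signVec, mem_univ, true_and]
  split_ifs with hA hB <;> norm_num [*]
  exact disjoint_left.mp h hA

theorem filter_glueVec (s : Finset ι) : univ.filter (fun i => glueVec s i = -(4 / 5)) = s := by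
  ext i; rw [mem_filter]; simp only [glueVec, mem_univ, true_and]; split_ifs <;> norm_num [*]

theorem sum_signVec {A B : Finset ι} (h : Disjoint A B) : ∑ i, signVec A B i = #A - #B := by
  have hpt : ∀ i, signVec A B i = (if i ∈ A then 1 else 0) - (if i ∈ B then 1 else 0) := by
    intro i; unfold signVec
    by_cases hA : i ∈ A
    · simp [hA, disjoint_left.mp h hA]
    · by_cases hB : i ∈ B <;> simp [hA, hB]
  simp [hpt, sum_sub_distrib]

theorem sum_signVec_mul_self {A B : Finset ι} (h : Disjoint A B) :
    ∑ i, signVec A B i * signVec A B i = #A + #B := by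
  have hpt : ∀ i, signVec A B i * signVec A B i =
      (if i ∈ A then 1 else 0) + (if i ∈ B then 1 else 0) := by
    intro i; unfold signVec
    by_cases hA : i ∈ A
    · simp [hA, disjoint_left.mp h hA]
    · by_cases hB : i ∈ B <;> simp [hA, hB]
  simp [hpt, sum_add_distrib]

theorem sum_glueVec (s : Finset ι) : ∑ i, glueVec s i = Fintype.card ι / 5 - #s := by
  have hpt : ∀ i, glueVec s i = 1 / 5 - (if i ∈ s then 1 else 0) := by
    intro i; unfold glueVec; split_ifs <;> norm_num
  simp [hpt, sum_sub_distrib, div_eq_mul_inv]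

theorem exists_perm_signVec_eq_comp {A B A' B' : Finset ι} (h : Disjoint A B)
    (h' : Disjoint A' B') (hA : #A = #A') (hB : #B = #B') :
    ∃ σ : Equiv.Perm ι, signVec A B = signVec A' B' ∘ σ := by
  refine exists_perm_eq_comp_of_card_fiber_eq_of_mem 0 (signVec_apply_mem A B)
    (signVec_apply_mem A' B') ?_
  simp only [mem_insert, mem_singleton]
  rintro c (rfl | rfl | rfl) hc
  · rwa [filter_signVec_eq_one, filter_signVec_eq_one]
  · rwa [filter_signVec_eq_neg_one h, filter_signVec_eq_neg_one h']
  · exact absurd rfl hc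

theorem exists_perm_glueVec_eq_comp {s s' : Finset ι} (h : #s = #s') :
    ∃ σ : Equiv.Perm ι, glueVec s = glueVec s' ∘ σ := by
  refine exists_perm_eq_comp_of_card_fiber_eq_of_mem (1 / 5) (glueVec_apply_mem s)
    (glueVec_apply_mem s') ?_
  simp only [mem_insert, mem_singleton]
  rintro c (rfl | rfl) hc
  · rwa [filter_glueVec, filter_glueVec]
  · exact absurd rfl hc

variable (ι)

def signPairs : Finset (Σ _ : Finset ι, Finset ι) :=
  (powersetCard 2 univ).sigma fun A => powersetCard 2 Aᶜ

-- Irreducible: otherwise elaborating `u ∈ norm4Finset (Fin 25)` starts evaluating the finset.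
@[irreducible] noncomputable def norm4Finset : Finset (ι → ℚ) :=
  (signPairs ι).image (fun p => signVec p.1 p.2) ∪ (powersetCard 5 univ).image glueVec ∪
    (powersetCard 5 univ).image (fun s => -glueVec s)

variable {ι}

theorem mem_signPairs {p : Σ _ : Finset ι, Finset ι} :
    p ∈ signPairs ι ↔ #p.1 = 2 ∧ #p.2 = 2 ∧ Disjoint p.1 p.2 := by
  simp [signPairs, mem_sigma, mem_powersetCard, subset_compl_iff_disjoint_left, and_comm]

theorem card_signPairs :
    #(signPairs ι) = (Fintype.card ι).choose 2 * (Fintype.card ι - 2).choose 2 := by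
  rw [signPairs, card_sigma, sum_congr rfl fun A hA => by
    rw [card_powersetCard, card_compl, (mem_powersetCard.mp hA).2], sum_const, card_powersetCard,
    card_univ, smul_eq_mul]

theorem glueVec_injective : Function.Injective (glueVec : Finset ι → ι → ℚ) := fun s t h => by
  rw [← filter_glueVec s, ← filter_glueVec t, h]

theorem signVec_injOn :
    Set.InjOn (fun p : Σ _ : Finset ι, Finset ι => signVec p.1 p.2) (signPairs ι) := by
  intro p hp q hq h
  have hpd := (mem_signPairs.mp hp).2.2
  have hqd := (mem_signPairs.mp hq).2.2
  simp only at h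
  refine Sigma.ext ?_ (heq_of_eq ?_)
  · rw [← filter_signVec_eq_one p.1 p.2, ← filter_signVec_eq_one q.1 q.2, h]
  · rw [← filter_signVec_eq_neg_one hpd, ← filter_signVec_eq_neg_one hqd, h]

/-- The three families are told apart by the value of any single coordinate. -/
theorem card_norm4Finset [Nonempty ι] : #(norm4Finset ι) =
    (Fintype.card ι).choose 2 * (Fintype.card ι - 2).choose 2 + 2 * (Fintype.card ι).choose 5 := by
  obtain ⟨i⟩ := ‹Nonempty ι›
  have hsign_glue : Disjoint ((signPairs ι).image fun p => signVec p.1 p.2)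
      ((powersetCard 5 univ).image glueVec) :=
    disjoint_image_image fun p s =>
      ne_of_apply_mem (by norm_num) i (signVec_apply_mem p.1 p.2 i) (glueVec_apply_mem s i)
  have hneg : Disjoint (((signPairs ι).image fun p => signVec p.1 p.2) ∪
      (powersetCard 5 univ).image glueVec) ((powersetCard 5 univ).image fun s => -glueVec s) :=
    disjoint_union_left.mpr
      ⟨disjoint_image_image fun p s =>
        ne_of_apply_mem (by norm_num) i (signVec_apply_mem p.1 p.2 i) (neg_glueVec_apply_mem s i),
      disjoint_image_image fun s t =>
        ne_of_apply_mem (by norm_num) i (glueVec_apply_mem s i) (neg_glueVec_apply_mem t i)⟩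
  rw [norm4Finset, card_union_of_disjoint hneg, card_union_of_disjoint hsign_glue,
    card_image_of_injOn signVec_injOn, card_image_of_injective _ glueVec_injective,
    card_image_of_injective _ fun s t h => glueVec_injective (neg_injective h), card_signPairs,
    card_powersetCard, card_univ]
  ring

theorem signVec_mem_norm4Finset {A B : Finset ι} (hA : #A = 2) (hB : #B = 2)
    (hAB : Disjoint A B) : signVec A B ∈ norm4Finset ι := by
  rw [norm4Finset]
  exact mem_union_left _ <| mem_union_left _ <|
    mem_image_of_mem (fun p : Σ _ : Finset ι, Finset ι => signVec p.1 p.2)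
      (mem_signPairs (p := ⟨A, B⟩) |>.mpr ⟨hA, hB, hAB⟩)

theorem glueVec_mem_norm4Finset {s : Finset ι} (hs : #s = 5) : glueVec s ∈ norm4Finset ι := by
  rw [norm4Finset]
  exact mem_union_left _ <| mem_union_right _ <|
    mem_image_of_mem _ (mem_powersetCard.mpr ⟨subset_univ s, hs⟩)

theorem neg_glueVec_mem_norm4Finset {s : Finset ι} (hs : #s = 5) :
    -glueVec s ∈ norm4Finset ι := by
  rw [norm4Finset]
  exact mem_union_right _ <|
    mem_image_of_mem (fun s => -glueVec s) (mem_powersetCard.mpr ⟨subset_univ s, hs⟩)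

theorem exists_perm_of_mem_norm4Finset {A₀ B₀ s₀ : Finset ι} (hA₀ : #A₀ = 2) (hB₀ : #B₀ = 2)
    (hAB₀ : Disjoint A₀ B₀) (hs₀ : #s₀ = 5) {u : ι → ℚ} (hu : u ∈ norm4Finset ι) :
    ∃ σ : Equiv.Perm ι,
      u = signVec A₀ B₀ ∘ σ ∨ u = glueVec s₀ ∘ σ ∨ u = -(glueVec s₀ ∘ σ) := by
  simp only [norm4Finset, mem_union, mem_image, mem_powersetCard] at hu
  rcases hu with (⟨p, hp, rfl⟩ | ⟨s, ⟨-, hs⟩, rfl⟩) | ⟨s, ⟨-, hs⟩, rfl⟩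
  · obtain ⟨hA, hB, hAB⟩ := mem_signPairs.mp hp
    obtain ⟨σ, hσ⟩ := exists_perm_signVec_eq_comp hAB hAB₀ (hA.trans hA₀.symm) (hB.trans hB₀.symm)
    exact ⟨σ, Or.inl hσ⟩
  · obtain ⟨σ, hσ⟩ := exists_perm_glueVec_eq_comp (hs.trans hs₀.symm)
    exact ⟨σ, Or.inr (Or.inl hσ)⟩
  · obtain ⟨σ, hσ⟩ := exists_perm_glueVec_eq_comp (hs.trans hs₀.symm)
    exact ⟨σ, Or.inr (Or.inr (by rw [hσ]))⟩

end Shapes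

section Coset

variable {ι : Type*} [Fintype ι]

theorem zero_le_sub_add_one_mul_sub {x b : ℚ} {n : ℤ} (h : x = n + b) :
    0 ≤ (x - b + 1) * (x - b) := by
  have hn : (0 : ℤ) ≤ (n + 1) * n := by
    rcases le_or_gt 0 n with hn | hn <;> nlinarith
  rw [h, add_sub_cancel_right]
  exact_mod_cast hn

theorem sum_sub_add_one_mul_sub (u : ι → ℚ) (b : ℚ) :
    ∑ i, (u i - b + 1) * (u i - b) =
      ∑ i, u i * u i - (2 * b - 1) * ∑ i, u i + Fintype.card ι * (b * (b - 1)) := by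
  have hpt : ∀ i, (u i - b + 1) * (u i - b) = u i * u i - (2 * b - 1) * u i + b * (b - 1) :=
    fun i => by ring
  simp only [hpt, sum_add_distrib, sum_sub_distrib, ← mul_sum, sum_const, card_univ, nsmul_eq_mul]
  ring

theorem eq_sub_one_or_eq_of_sum_eq_zero {u : ι → ℚ} {b : ℚ} (hb : ∀ i, ∃ n : ℤ, u i = n + b)
    (heq : ∑ i, (u i - b + 1) * (u i - b) = 0) (i : ι) : u i = b - 1 ∨ u i = b := by
  have hnonneg : ∀ j ∈ univ, 0 ≤ (u j - b + 1) * (u j - b) := fun j _ =>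
    (hb j).elim fun _ hn => zero_le_sub_add_one_mul_sub hn
  rcases mul_eq_zero.mp ((sum_eq_zero_iff_of_nonneg hnonneg).mp heq i (mem_univ i)) with h | h
  · left; linarith
  · right; linarith

end Coset

theorem glueA24_mem_niemeierA24 : glueA24 ∈ NiemeierA24 :=
  AddSubgroup.subset_closure (Or.inr rfl)

theorem mem_niemeierA24_iff {x : Fin 25 → ℚ} :
    x ∈ NiemeierA24 ↔ ∑ i, x i = 0 ∧ ∃ k : ℤ, ∀ i, ∃ m : ℤ, x i = m + k / 5 := by
  have hglue_sum : ∑ i, glueA24 i = 0 := by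
    simp only [glueA24, Fin.sum_univ_succ, Fin.sum_univ_zero]; norm_num
  constructor
  · intro hx
    induction hx using AddSubgroup.closure_induction with
    | mem y hy =>
      rcases hy with ⟨hint, hsum⟩ | rfl
      · exact ⟨hsum, 0, fun i => (hint i).imp fun m hm => by simp [hm]⟩
      · refine ⟨hglue_sum, 1, fun i => ?_⟩
        by_cases hi : i.val < 20
        · exact ⟨0, by simp [glueA24, hi]⟩
        · exact ⟨-1, by norm_num [glueA24, hi]⟩
    | zero => exact ⟨by simp, 0, fun _ => ⟨0, by simp⟩⟩
    | add y z _ _ hy hz =>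
      obtain ⟨hy, k, hk⟩ := hy
      obtain ⟨hz, l, hl⟩ := hz
      refine ⟨by simp [sum_add_distrib, hy, hz], k + l, fun i => ?_⟩
      obtain ⟨m, hm⟩ := hk i
      obtain ⟨n, hn⟩ := hl i
      exact ⟨m + n, by simp only [Pi.add_apply, hm, hn]; push_cast; ring⟩
    | neg y _ hy =>
      obtain ⟨hy, k, hk⟩ := hy
      refine ⟨by simp [hy], -k, fun i => ?_⟩
      obtain ⟨m, hm⟩ := hk i
      exact ⟨-m, by simp only [Pi.neg_apply, hm]; push_cast; ring⟩
  · rintro ⟨hsum, k, hk⟩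
    have hroot : x - k • glueA24 ∈ A24set := by
      refine ⟨fun i => ?_, by simp [sum_sub_distrib, ← mul_sum, hsum, hglue_sum]⟩
      obtain ⟨m, hm⟩ := hk i
      by_cases hi : i.val < 20
      · exact ⟨m, by simp [glueA24, hi, hm]; ring⟩
      · exact ⟨m + k, by simp [glueA24, hi, hm]; ring⟩
    have hroot' : x - k • glueA24 ∈ NiemeierA24 := AddSubgroup.subset_closure (Or.inl hroot)
    simpa using add_mem hroot' (zsmul_mem glueA24_mem_niemeierA24 k)

theorem qip_neg (u : Fin 25 → ℚ) : qip (-u) (-u) = qip u u := by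
  simp [qip]

theorem comp_perm_mem_norm4 {u : Fin 25 → ℚ} (hu : u ∈ NiemeierA24 ∧ qip u u = 4)
    (σ : Equiv.Perm (Fin 25)) : u ∘ σ ∈ NiemeierA24 ∧ qip (u ∘ σ) (u ∘ σ) = 4 := by
  obtain ⟨⟨hsum, k, hk⟩, h4⟩ := And.imp_left mem_niemeierA24_iff.mp hu
  exact ⟨mem_niemeierA24_iff.mpr ⟨(Equiv.sum_comp σ u).trans hsum, k, fun i => hk (σ i)⟩,
    (Equiv.sum_comp σ fun i => u i * u i).trans h4⟩

theorem t4_mem_niemeierA24 : t4 ∈ NiemeierA24 := by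
  refine AddSubgroup.subset_closure (Or.inl ⟨fun i => ?_, ?_⟩)
  · unfold t4; split_ifs
    exacts [⟨1, by simp⟩, ⟨-1, by simp⟩, ⟨0, by simp⟩]
  · simp only [t4, Fin.sum_univ_succ, Fin.sum_univ_zero]; norm_num

theorem qip_t4 : qip t4 t4 = 4 := by
  simp only [qip, t4, Fin.sum_univ_succ, Fin.sum_univ_zero]; norm_num

theorem qip_glueA24 : qip glueA24 glueA24 = 4 := by
  simp only [qip, glueA24, Fin.sum_univ_succ, Fin.sum_univ_zero]; norm_num

theorem t4_eq_signVec : t4 = signVec {0, 1} {2, 3} := by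
  funext i; fin_cases i <;> rfl

theorem glueA24_eq_glueVec : glueA24 = glueVec {i | 20 ≤ i.val} := by
  funext i; by_cases hi : i.val < 20 <;> simp [glueA24, glueVec, hi]

section Classification

variable {u : Fin 25 → ℚ}

theorem sum_sub_add_one_mul_sub_of_qip_eq_four (hsum : ∑ i, u i = 0) (hnorm : qip u u = 4) (b : ℚ) :
    ∑ i, (u i - b + 1) * (u i - b) = 4 + 25 * (b * (b - 1)) := by
  unfold qip at hnorm
  rw [sum_sub_add_one_mul_sub, hsum, hnorm, Fintype.card_fin]
  push_cast; ring

theorem not_forall_int_add_two_fifths (hsum : ∑ i, u i = 0) (hnorm : qip u u = 4) :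
    ¬ ∀ i, ∃ n : ℤ, u i = n + 2 / 5 := fun hb => by
  have hnonneg : 0 ≤ ∑ i, (u i - 2 / 5 + 1) * (u i - 2 / 5) :=
    sum_nonneg fun i _ => (hb i).elim fun _ hn => zero_le_sub_add_one_mul_sub hn
  rw [sum_sub_add_one_mul_sub_of_qip_eq_four hsum hnorm] at hnonneg
  norm_num at hnonneg

theorem exists_eq_glueVec_of_forall_int_add_one_fifth (hsum : ∑ i, u i = 0) (hnorm : qip u u = 4)
    (hb : ∀ i, ∃ n : ℤ, u i = n + 1 / 5) : ∃ s : Finset (Fin 25), #s = 5 ∧ u = glueVec s := by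
  have hvals := eq_sub_one_or_eq_of_sum_eq_zero hb
    (by rw [sum_sub_add_one_mul_sub_of_qip_eq_four hsum hnorm]; norm_num)
  have hu : u = glueVec {i | u i = -(4 / 5)} := funext fun i => by
    rcases hvals i with h | h <;> norm_num [glueVec, h]
  refine ⟨_, ?_, hu⟩
  have hcard := sum_glueVec (ι := Fin 25) {i | u i = -(4 / 5)}
  rw [← hu, hsum, Fintype.card_fin] at hcard
  exact_mod_cast (by linarith : (#{i | u i = -(4 / 5)} : ℚ) = 5)

/-- A coordinate with `|u i| ≥ 2` would carry the whole norm, leaving the coordinate sum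
`u i ≠ 0`. -/
theorem apply_mem_of_forall_int (hsum : ∑ i, u i = 0) (hnorm : qip u u = 4)
    (hint : ∀ i, ∃ n : ℤ, u i = n) (i : Fin 25) : u i ∈ ({1, -1, 0} : Finset ℚ) := by
  obtain ⟨n, hn⟩ := hint i
  by_contra hv
  have hn2 : n ≤ -2 ∨ 2 ≤ n := by
    simp only [mem_insert, mem_singleton, hn] at hv
    norm_cast at hv
    omega
  have hsq : 4 ≤ u i * u i := by
    rw [hn]
    exact_mod_cast (by rcases hn2 with h | h <;> nlinarith : (4 : ℤ) ≤ n * n)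
  have hrest : ∀ j ∈ univ.erase i, u j = 0 := by
    have hsplit := add_sum_erase univ (fun j => u j * u j) (mem_univ i)
    have hzero : ∑ j ∈ univ.erase i, u j * u j = 0 :=
      le_antisymm (by unfold qip at hnorm; linarith) (sum_nonneg fun j _ => mul_self_nonneg (u j))
    exact fun j hj => mul_self_eq_zero.mp
      ((sum_eq_zero_iff_of_nonneg fun j _ => mul_self_nonneg (u j)).mp hzero j hj)
  rw [← add_sum_erase univ u (mem_univ i), sum_eq_zero hrest, add_zero] at hsum
  rw [hsum] at hsq
  norm_num at hsq

theorem exists_eq_signVec_of_forall_int (hsum : ∑ i, u i = 0) (hnorm : qip u u = 4)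
    (hint : ∀ i, ∃ n : ℤ, u i = n) :
    ∃ A B : Finset (Fin 25), #A = 2 ∧ #B = 2 ∧ Disjoint A B ∧ u = signVec A B := by
  have hAB : Disjoint (univ.filter fun i => u i = 1) (univ.filter fun i => u i = -1) :=
    disjoint_filter.mpr fun i _ h1 h2 => by norm_num [h1] at h2
  have hu : u = signVec {i | u i = 1} {i | u i = -1} := funext fun i => by
    have hvals := apply_mem_of_forall_int hsum hnorm hint i
    simp only [mem_insert, mem_singleton] at hvals
    rcases hvals with h | h | h <;> simp [signVec, h]
  have hdiff := sum_signVec hAB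
  have hadd := sum_signVec_mul_self hAB
  rw [← hu, hsum] at hdiff
  rw [← hu] at hadd
  unfold qip at hnorm
  rw [hnorm] at hadd
  exact ⟨_, _, by exact_mod_cast (by linarith : (#{i | u i = 1} : ℚ) = 2),
    by exact_mod_cast (by linarith : (#{i | u i = -1} : ℚ) = 2), hAB, hu⟩

theorem mem_norm4Finset_of_qip_eq_four (hu : u ∈ NiemeierA24) (h4 : qip u u = 4) :
    u ∈ norm4Finset (Fin 25) := by
  obtain ⟨hsum, k, hk⟩ := mem_niemeierA24_iff.mp hu
  have hres : ∀ i, ∃ n : ℤ, u i = n + ((k % 5 : ℤ) : ℚ) / 5 := fun i => by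
    obtain ⟨m, hm⟩ := hk i
    have hk' : (k : ℚ) = (k % 5 : ℤ) + 5 * (k / 5 : ℤ) := by
      exact_mod_cast (Int.emod_add_mul_ediv k 5).symm
    exact ⟨m + k / 5, by rw [hm, hk']; push_cast; ring⟩
  have hneg_sum : ∑ i, (-u) i = 0 := by simp [hsum]
  have hneg_norm : qip (-u) (-u) = 4 := by rw [qip_neg, h4]
  have hneg_res : ∀ b b' : ℚ, b + b' = 1 → (∀ i, ∃ n : ℤ, u i = n + b) →
      ∀ i, ∃ n : ℤ, (-u) i = n + b' := fun b b' hbb' hb i => by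
    obtain ⟨n, hn⟩ := hb i
    exact ⟨-n - 1, by rw [Pi.neg_apply, hn]; push_cast; linarith⟩
  have hr : k % 5 = 0 ∨ k % 5 = 1 ∨ k % 5 = 2 ∨ k % 5 = 3 ∨ k % 5 = 4 := by omega
  -- the residues `3` and `4` are reduced to `2` and `1` by passing to `-u`
  rcases hr with hr | hr | hr | hr | hr <;> rw [hr] at hres <;> norm_num at hres
  · obtain ⟨A, B, hA, hB, hAB, rfl⟩ := exists_eq_signVec_of_forall_int hsum h4 hres
    exact signVec_mem_norm4Finset hA hB hAB
  · obtain ⟨s, hs, rfl⟩ := exists_eq_glueVec_of_forall_int_add_one_fifth hsum h4 hres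
    exact glueVec_mem_norm4Finset hs
  · exact absurd hres (not_forall_int_add_two_fifths hsum h4)
  · exact absurd (hneg_res _ _ (by norm_num) hres)
      (not_forall_int_add_two_fifths hneg_sum hneg_norm)
  · obtain ⟨s, hs, hus⟩ := exists_eq_glueVec_of_forall_int_add_one_fifth hneg_sum hneg_norm
      (hneg_res _ _ (by norm_num) hres)
    rw [← neg_neg u, hus]
    exact neg_glueVec_mem_norm4Finset hs

end Classification

/-- The number of norm-4 vectors in the Niemeier lattice `A_24` equals
`C(4,2)·C(25,4) + 2·C(25,5) = 75900 + 106260 = 182160`, and they are exactly the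
vectors of type `(1²,-1²,0^21)` and `±(1/5^20, -4/5^5)` up to permutation of
coordinates. -/
theorem niemeierA24_norm4 :
    Nat.choose 4 2 * Nat.choose 25 4 = 75900 ∧
    2 * Nat.choose 25 5 = 106260 ∧
    Nat.card {u : Fin 25 → ℚ | u ∈ NiemeierA24 ∧ qip u u = 4} = 182160 ∧
    {u : Fin 25 → ℚ | u ∈ NiemeierA24 ∧ qip u u = 4} =
      {u : Fin 25 → ℚ | ∃ σ : Equiv.Perm (Fin 25),
        u = (fun i => t4 (σ i)) ∨ u = (fun i => glueA24 (σ i)) ∨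
        u = (fun i => -glueA24 (σ i))} := by
  have hSF : {u : Fin 25 → ℚ | u ∈ NiemeierA24 ∧ qip u u = 4} ⊆ norm4Finset (Fin 25) :=
    fun u hu => mem_norm4Finset_of_qip_eq_four hu.1 hu.2
  have hFP : (norm4Finset (Fin 25) : Set (Fin 25 → ℚ)) ⊆ {u | ∃ σ : Equiv.Perm (Fin 25),
      u = (fun i => t4 (σ i)) ∨ u = (fun i => glueA24 (σ i)) ∨
        u = (fun i => -glueA24 (σ i))} := fun u hu => by
    rw [t4_eq_signVec, glueA24_eq_glueVec]
    exact exists_perm_of_mem_norm4Finset rfl rfl (by decide) rfl hu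
  have hPS : {u : Fin 25 → ℚ | ∃ σ : Equiv.Perm (Fin 25),
      u = (fun i => t4 (σ i)) ∨ u = (fun i => glueA24 (σ i)) ∨
        u = (fun i => -glueA24 (σ i))} ⊆ {u | u ∈ NiemeierA24 ∧ qip u u = 4} := by
    rintro _ ⟨σ, rfl | rfl | rfl⟩
    exacts [comp_perm_mem_norm4 ⟨t4_mem_niemeierA24, qip_t4⟩ σ,
      comp_perm_mem_norm4 ⟨glueA24_mem_niemeierA24, qip_glueA24⟩ σ,
      comp_perm_mem_norm4 ⟨neg_mem glueA24_mem_niemeierA24, (qip_neg _).trans qip_glueA24⟩ σ]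
  refine ⟨by decide, by decide, ?_, (hSF.trans hFP).antisymm hPS⟩
  rw [hSF.antisymm (hFP.trans hPS), Nat.card_coe_set_eq, Set.ncard_coe_finset, card_norm4Finset,
    Fintype.card_fin]
  decide
end

section
/- In the Niemeier lattice A_24 with w = (1^4, -1^4, 0^{17}), the quantity η(L,w) = 1 + |S_2^w| + (1/2)|S_4^w| equals 1 + 16 + 35 = 52, which is not congruent to 0 modulo 8. -/
/-- `S_i^w = {u ∈ L : u·u = i = -u·w}`. -/
def SA24 (i : ℚ) : Set (Fin 25 → ℚ) :=
  {u | u ∈ NiemeierA24 ∧ qip u u = i ∧ qip u wA24 = -i}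

/-! Every vector of `A_24` has the form `u = m + (r/5)·𝟙` with `m ∈ ℤ^25` and `0 ≤ r < 5`, and
`∑ uᵢ = 0` forces `∑ mᵢ = -5r`, so `u·u = ∑ mᵢ² - r²`. Since `mᵢ² ≥ -mᵢ` for integers,
`u·u = t` gives `t + r² ≥ 5r`: only `r = 0` survives for `t = 2`, and for `t = 4` only
`r ∈ {0, 1, 4}`, the last two with equality, i.e. `m ∈ {-1, 0}^25`.

For `r = 0` the terms `uᵢ (uᵢ + wᵢ)` are nonnegative and sum to `u·u + u·w = 0`, so `u` is `-w`
restricted to a `t`-set on which `w` sums to `0`: `4·4 = 16`, resp. `6·6 = 36` vectors.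
For `r ∈ {1, 4}`, `u = r/5 - 1_N` with `|N| = 5r` and `∑_N w = 4`, which forces
`N = {w = 1} ∪ {j}`, resp. `Nᶜ = {w = -1} ∪ {j}`, with `wⱼ = 0`: another `17 + 17` vectors. -/

open Finset

lemma Int.sq_add_self_nonneg (x : ℤ) : 0 ≤ x ^ 2 + x := by
  rcases le_or_gt 0 x with h | h <;> nlinarith

lemma Int.neg_sum_le_sum_sq {ι : Type*} (s : Finset ι) (m : ι → ℤ) :
    -∑ i ∈ s, m i ≤ ∑ i ∈ s, m i ^ 2 := by
  rw [← sum_neg_distrib]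
  exact sum_le_sum fun i _ => by linarith [Int.sq_add_self_nonneg (m i)]

lemma Int.eq_neg_one_or_zero_of_sum_sq_eq_neg_sum {ι : Type*} {s : Finset ι} {m : ι → ℤ}
    (h : ∑ i ∈ s, m i ^ 2 = -∑ i ∈ s, m i) {i : ι} (hi : i ∈ s) : m i = -1 ∨ m i = 0 := by
  have hzero : ∑ i ∈ s, (m i ^ 2 + m i) = 0 := by rw [sum_add_distrib, h]; ring
  have := (sum_eq_zero_iff_of_nonneg fun i _ => Int.sq_add_self_nonneg (m i)).mp hzero i hi
  have : m i * (m i + 1) = 0 := by linarith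
  rcases mul_eq_zero.mp this with h | h <;> omega

lemma intCast_mul_add_nonneg (x : ℤ) {e : ℚ} (he : e = -1 ∨ e = 0 ∨ e = 1) :
    0 ≤ (x : ℚ) * (x + e) := by
  have h₁ := Int.sq_add_self_nonneg x
  have h₂ := Int.sq_add_self_nonneg (-x)
  qify at h₁ h₂
  rcases he with rfl | rfl | rfl <;> nlinarith

lemma Finset.exists_eq_insert_of_sum_eq_card {ι R : Type*} [DecidableEq ι] [CommRing R]
    [LinearOrder R] [IsStrictOrderedRing R] {f : ι → R} {A N : Finset ι}
    (hA : ∀ i ∈ A, f i = 1) (hAc : ∀ i ∉ A, f i ≤ 0) (hcard : N.card = A.card + 1)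
    (hsum : ∑ i ∈ N, f i = A.card) : ∃ j ∉ A, f j = 0 ∧ N = insert j A := by
  set g : ι → R := fun i => (if i ∈ A then 1 else 0) - f i
  have hg : ∀ i, 0 ≤ g i := fun i => by
    by_cases hi : i ∈ A <;> simp [g, hi, hA, hAc]
  have hgN : ∑ i ∈ N, g i = (N ∩ A).card - A.card := by
    simp [g, sum_sub_distrib, hsum]
  have hNA : (N ∩ A).card ≤ A.card := card_le_card inter_subset_right
  have hgN0 : ∑ i ∈ N, g i = 0 := le_antisymm
    (by rw [hgN, sub_nonpos]; exact_mod_cast hNA) (sum_nonneg fun i _ => hg i)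
  have hAN : A ⊆ N := by
    have : ((N ∩ A).card : R) = A.card := by linarith
    exact inter_eq_right.mp (eq_of_subset_of_card_le inter_subset_right (by exact_mod_cast this.ge))
  obtain ⟨j, hj⟩ := card_eq_one.mp (by rw [card_sdiff_of_subset hAN]; omega : (N \ A).card = 1)
  have hjN : j ∈ N \ A := hj ▸ mem_singleton_self j
  rw [mem_sdiff] at hjN
  refine ⟨j, hjN.2, ?_, ?_⟩
  · have := (sum_eq_zero_iff_of_nonneg fun i _ => hg i).mp hgN0 j hjN.1
    simpa [g, hjN.2, eq_comm] using this
  · rw [← sdiff_union_of_subset hAN, hj, insert_eq]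

namespace NiemeierA24

variable {u : Fin 25 → ℚ} {r : ℕ} {m : Fin 25 → ℤ} {C N : Finset (Fin 25)}

lemma sum_glueA24 : ∑ i, glueA24 i = 0 := by
  norm_num [Fin.sum_univ_succ, glueA24]

lemma glueA24_eq (i : Fin 25) :
    glueA24 i = ((if i.val < 20 then 0 else -1 : ℤ) : ℚ) + 1 / 5 := by
  unfold glueA24; split_ifs <;> norm_num

lemma exists_intCast_add_div_five_of_mem (hu : u ∈ NiemeierA24) :
    ∑ i, u i = 0 ∧ ∃ r : ℤ, ∃ m : Fin 25 → ℤ, ∀ i, u i = m i + r / 5 := by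
  induction hu using AddSubgroup.closure_induction with
  | mem u hu =>
    rcases hu with ⟨hint, hsum⟩ | rfl
    · choose m hm using hint
      exact ⟨hsum, 0, m, by simpa using hm⟩
    · exact ⟨sum_glueA24, 1, fun i => if i.val < 20 then 0 else -1,
        fun i => by rw [glueA24_eq]; norm_num⟩
  | zero => exact ⟨by simp, 0, 0, by simp⟩
  | add u v _ _ hu hv =>
    obtain ⟨hu, r, m, hm⟩ := hu
    obtain ⟨hv, s, n, hn⟩ := hv
    refine ⟨by simp [sum_add_distrib, hu, hv], r + s, m + n, fun i => ?_⟩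
    simp only [Pi.add_apply, hm, hn]; push_cast; ring
  | neg u _ hu =>
    obtain ⟨hu, r, m, hm⟩ := hu
    refine ⟨by simp [hu], -r, -m, fun i => ?_⟩
    simp only [Pi.neg_apply, hm]; push_cast; ring

lemma mem_iff : u ∈ NiemeierA24 ↔
    ∑ i, u i = 0 ∧ ∃ r : ℕ, r < 5 ∧ ∃ m : Fin 25 → ℤ, ∀ i, u i = m i + r / 5 := by
  constructor
  · intro hu
    obtain ⟨hsum, r, m, hm⟩ := exists_intCast_add_div_five_of_mem hu
    refine ⟨hsum, (r % 5).toNat, by omega, fun i => m i + r / 5, fun i => ?_⟩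
    have hr : (((r % 5).toNat : ℕ) : ℚ) = ((r % 5 : ℤ) : ℚ) := by
      exact_mod_cast Int.toNat_of_nonneg (Int.emod_nonneg r (by norm_num))
    rw [hm i, hr]
    conv_lhs => rw [← Int.mul_ediv_add_emod r 5]
    push_cast
    ring
  · rintro ⟨hsum, r, -, m, hm⟩
    have hint : u - r • glueA24 ∈ A24set := by
      refine ⟨fun i => ⟨m i - r * (if i.val < 20 then 0 else -1), ?_⟩, ?_⟩
      · rw [Pi.sub_apply, Pi.smul_apply, nsmul_eq_mul, hm, glueA24_eq]
        push_cast
        ring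
      · simp [sum_sub_distrib, hsum, ← mul_sum, sum_glueA24]
    have hglue : glueA24 ∈ NiemeierA24 := AddSubgroup.subset_closure (Or.inr rfl)
    have hint' : u - r • glueA24 ∈ NiemeierA24 := AddSubgroup.subset_closure (Or.inl hint)
    simpa using add_mem hint' (nsmul_mem hglue r)

lemma sum_eq_neg_five_mul (hsum : ∑ i, u i = 0) (hm : ∀ i, u i = m i + r / 5) :
    ∑ i, m i = -(5 * r : ℤ) := by
  have : ∑ i, u i = ∑ i, (m i : ℚ) + 5 * r := by
    simp only [hm, sum_add_distrib]; simp; ring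
  exact_mod_cast (by linarith : ∑ i, (m i : ℚ) = -(5 * r))

lemma qip_self_eq (hsum : ∑ i, u i = 0) (hm : ∀ i, u i = m i + r / 5) :
    qip u u = ∑ i, (m i : ℚ) ^ 2 - r ^ 2 := by
  have hm' : ∑ i, (m i : ℚ) = -(5 * r) := by exact_mod_cast sum_eq_neg_five_mul hsum hm
  calc qip u u = ∑ i, ((m i : ℚ) ^ 2 + 2 * (r / 5) * m i + (r / 5) ^ 2) :=
        sum_congr rfl fun i _ => by rw [hm]; ring
    _ = ∑ i, (m i : ℚ) ^ 2 - r ^ 2 := by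
        rw [sum_add_distrib, sum_add_distrib, ← mul_sum, hm']; simp; ring

lemma exists_int_add_div_five_of_mem_SA24 {t : ℕ} (hu : u ∈ SA24 t) :
    ∃ r : ℕ, r < 5 ∧ ∃ m : Fin 25 → ℤ, (∀ i, u i = m i + r / 5) ∧
      ∑ i, m i = -(5 * r : ℤ) ∧ ∑ i, m i ^ 2 = t + r ^ 2 := by
  obtain ⟨hL, hnorm, -⟩ := hu
  obtain ⟨hsum, r, hr, m, hm⟩ := mem_iff.mp hL
  refine ⟨r, hr, m, hm, sum_eq_neg_five_mul hsum hm, ?_⟩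
  have := qip_self_eq hsum hm
  exact_mod_cast (by linarith : ∑ i, (m i : ℚ) ^ 2 = t + r ^ 2)

lemma five_mul_le_add_sq {t : ℕ} (hs : ∑ i, m i = -(5 * r : ℤ))
    (hsq : ∑ i, m i ^ 2 = t + r ^ 2) : 5 * r ≤ t + r ^ 2 := by
  have := Int.neg_sum_le_sum_sq univ m
  rw [hs, hsq] at this
  zify
  linarith

lemma sum_wA24 : ∑ i, wA24 i = 0 := by
  norm_num [Fin.sum_univ_succ, wA24]

lemma wA24_cases (i : Fin 25) : wA24 i = -1 ∨ wA24 i = 0 ∨ wA24 i = 1 := by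
  unfold wA24; split_ifs <;> simp

def wPos : Finset (Fin 25) := univ.filter (wA24 · = 1)

def wNeg : Finset (Fin 25) := univ.filter (wA24 · = -1)

def wZero : Finset (Fin 25) := univ.filter (wA24 · = 0)

def wSupp : Finset (Fin 25) := univ.filter (wA24 · ≠ 0)

lemma wA24_mul_self {i : Fin 25} (h : wA24 i ≠ 0) : wA24 i * wA24 i = 1 := by
  rcases wA24_cases i with h' | h' | h' <;> simp_all

lemma card_wPos : wPos.card = 4 := by decide

lemma card_wNeg : wNeg.card = 4 := by decide

lemma wA24_nonpos_of_notMem_wPos {i : Fin 25} (hi : i ∉ wPos) : wA24 i ≤ 0 := by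
  rcases wA24_cases i with h | h | h <;> simp_all [wPos]

lemma wA24_nonneg_of_notMem_wNeg {i : Fin 25} (hi : i ∉ wNeg) : 0 ≤ wA24 i := by
  rcases wA24_cases i with h | h | h <;> simp_all [wNeg]

def intVec (C : Finset (Fin 25)) : Fin 25 → ℚ := fun i => if i ∈ C then -wA24 i else 0

def intVecs (t : ℕ) : Finset (Fin 25 → ℚ) :=
  (wSupp.powerset.filter fun C => C.card = t ∧ ∑ i ∈ C, wA24 i = 0).image intVec

def glueVec (r : ℕ) (N : Finset (Fin 25)) : Fin 25 → ℚ := fun i => r / 5 - if i ∈ N then 1 else 0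

def glueVecs : Finset (Fin 25 → ℚ) :=
  wZero.image (fun j => glueVec 1 (insert j wPos)) ∪
  wZero.image (fun j => glueVec 4 (insert j wNeg)ᶜ)

lemma isIntVec_intVec (C : Finset (Fin 25)) : isIntVec (intVec C) := fun i => by
  unfold intVec
  split_ifs
  · rcases wA24_cases i with h | h | h <;> rw [h]
    exacts [⟨1, by simp⟩, ⟨0, by simp⟩, ⟨-1, by simp⟩]
  · exact ⟨0, by simp⟩

lemma sum_intVec : ∑ i, intVec C i = -∑ i ∈ C, wA24 i := by
  simp [intVec, sum_ite_mem, sum_neg_distrib]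

lemma qip_intVec_wA24 (hC : C ⊆ wSupp) :
    qip (intVec C) wA24 = -C.card := by
  have : ∀ i ∈ C, wA24 i * wA24 i = 1 := fun i hi => wA24_mul_self (mem_filter.mp (hC hi)).2
  simp [qip, intVec, ite_mul, sum_ite_mem, sum_neg_distrib, sum_congr rfl this]

lemma qip_intVec_self (hC : C ⊆ wSupp) :
    qip (intVec C) (intVec C) = C.card := by
  have : ∀ i ∈ C, wA24 i * wA24 i = 1 := fun i hi => wA24_mul_self (mem_filter.mp (hC hi)).2
  simp [qip, intVec, ite_mul, sum_ite_mem, sum_neg_distrib, sum_congr rfl this]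

lemma intVec_mem_SA24 {t : ℕ} (hC : C ⊆ wSupp) (hCt : C.card = t)
    (hCw : ∑ i ∈ C, wA24 i = 0) : intVec C ∈ SA24 t := by
  refine ⟨AddSubgroup.subset_closure (Or.inl ⟨isIntVec_intVec C, ?_⟩), ?_, ?_⟩
  · rw [sum_intVec, hCw, neg_zero]
  · rw [qip_intVec_self hC, hCt]
  · rw [qip_intVec_wA24 hC, hCt]

lemma mem_intVecs_of_mem_SA24 {t : ℕ} (hu : u ∈ SA24 t) (hm : ∀ i, u i = m i) :
    u ∈ intVecs t := by
  obtain ⟨hL, hnorm, hw⟩ := hu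
  have hcoord : ∀ i, u i = 0 ∨ u i = -wA24 i := by
    have hzero : ∑ i, u i * (u i + wA24 i) = 0 := by
      simp only [mul_add, sum_add_distrib]
      rw [← qip, ← qip, hnorm, hw, add_neg_cancel]
    intro i
    have := (sum_eq_zero_iff_of_nonneg fun i _ => hm i ▸ intCast_mul_add_nonneg (m i)
      (wA24_cases i)).mp hzero i (mem_univ i)
    rcases mul_eq_zero.mp this with h | h
    exacts [.inl h, .inr (eq_neg_of_add_eq_zero_left h)]
  set C := univ.filter (u · ≠ 0)
  have hC : C ⊆ wSupp := fun i hi => by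
    have hi := (mem_filter.mp hi).2
    simpa [wSupp, (hcoord i).resolve_left hi] using hi
  have hu : u = intVec C := funext fun i => by
    by_cases hi : u i = 0
    · simp [intVec, C, hi]
    · simp [intVec, C, (hcoord i).resolve_left hi]
  refine mem_image.mpr ⟨C, mem_filter.mpr ⟨mem_powerset.mpr hC, ?_, ?_⟩, hu.symm⟩
  · exact_mod_cast (qip_intVec_self hC).symm.trans (hu ▸ hnorm)
  · have := (mem_iff.mp hL).1
    rw [hu, sum_intVec] at this
    linarith

lemma sum_glueVec : ∑ i, glueVec r N i = 5 * r - N.card := by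
  simp [glueVec, sum_sub_distrib]; ring

lemma qip_glueVec_self (hN : N.card = 5 * r) : qip (glueVec r N) (glueVec r N) = 5 * r - r ^ 2 := by
  calc qip (glueVec r N) (glueVec r N)
      = ∑ i, ((r / 5 : ℚ) ^ 2 + (1 - 2 * (r / 5)) * if i ∈ N then 1 else 0) :=
        sum_congr rfl fun i _ => by unfold glueVec; split_ifs <;> ring
    _ = 5 * r - r ^ 2 := by
        rw [sum_add_distrib, ← mul_sum, sum_boole]; simp [hN]; ring

lemma qip_glueVec_wA24 : qip (glueVec r N) wA24 = -∑ i ∈ N, wA24 i := by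
  simp [qip, glueVec, sub_mul, sum_sub_distrib, ← mul_sum, sum_wA24, ite_mul, sum_ite_mem]

lemma glueVec_mem_SA24 (hr : r = 1 ∨ r = 4) (hN : N.card = 5 * r) (hw : ∑ i ∈ N, wA24 i = 4) :
    glueVec r N ∈ SA24 4 := by
  refine ⟨mem_iff.mpr ⟨?_, r, by omega, fun i => -if i ∈ N then 1 else 0, fun i => ?_⟩, ?_, ?_⟩
  · rw [sum_glueVec, hN]; push_cast; ring
  · simp only [glueVec]; split_ifs <;> push_cast <;> ring
  · rw [qip_glueVec_self hN]; rcases hr with rfl | rfl <;> norm_num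
  · rw [qip_glueVec_wA24, hw]

lemma glueVecs_subset_SA24 : ↑glueVecs ⊆ SA24 4 := by
  have hpos : ∀ j ∈ wZero, (insert j wPos).card = 5 ∧ ∑ i ∈ insert j wPos, wA24 i = 4 := by
    decide +kernel
  have hneg : ∀ j ∈ wZero, (insert j wNeg)ᶜ.card = 20 ∧ ∑ i ∈ (insert j wNeg)ᶜ, wA24 i = 4 := by
    decide +kernel
  intro u hu
  rcases mem_union.mp hu with hu | hu <;> obtain ⟨j, hj, rfl⟩ := mem_image.mp hu
  · exact glueVec_mem_SA24 (.inl rfl) (hpos j hj).1 (hpos j hj).2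
  · exact glueVec_mem_SA24 (.inr rfl) (hneg j hj).1 (hneg j hj).2

lemma exists_glueVec_eq (hm : ∀ i, u i = m i + r / 5) (hm₀ : ∀ i, m i = -1 ∨ m i = 0)
    (hs : ∑ i, m i = -(5 * r : ℤ)) : ∃ N : Finset (Fin 25), N.card = 5 * r ∧ u = glueVec r N := by
  refine ⟨univ.filter (m · = -1), ?_, funext fun i => ?_⟩
  · have : ∑ i, m i = ∑ i, -(if m i = -1 then 1 else 0 : ℤ) :=
      sum_congr rfl fun i _ => by rcases hm₀ i with h | h <;> simp [h]
    rw [sum_neg_distrib, sum_boole, hs] at this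
    omega
  · rcases hm₀ i with h | h <;> simp [glueVec, hm, h]; ring

lemma mem_glueVecs_of_mem_SA24 (hu : u ∈ SA24 4) (hr : r = 1 ∨ r = 4)
    (hm : ∀ i, u i = m i + r / 5) (hm₀ : ∀ i, m i = -1 ∨ m i = 0)
    (hs : ∑ i, m i = -(5 * r : ℤ)) : u ∈ glueVecs := by
  obtain ⟨N, hN, rfl⟩ := exists_glueVec_eq hm hm₀ hs
  have hw : ∑ i ∈ N, wA24 i = 4 := by linarith [hu.2.2, qip_glueVec_wA24 (r := r) (N := N)]
  rcases hr with rfl | rfl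
  · obtain ⟨j, -, hj, rfl⟩ := exists_eq_insert_of_sum_eq_card (A := wPos)
      (fun i hi => (mem_filter.mp hi).2) (fun i hi => wA24_nonpos_of_notMem_wPos hi)
      (by rw [hN, card_wPos]) (by rw [hw, card_wPos]; norm_num)
    exact mem_union_left _ (mem_image.mpr ⟨j, mem_filter.mpr ⟨mem_univ j, hj⟩, rfl⟩)
  · have hNc : Nᶜ.card = 5 := by rw [card_compl, hN]; rfl
    have hwc : ∑ i ∈ Nᶜ, -wA24 i = 4 := by
      linarith [sum_compl_add_sum N wA24, sum_wA24, sum_neg_distrib (s := Nᶜ) (f := wA24)]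
    obtain ⟨j, -, hj, hNj⟩ := exists_eq_insert_of_sum_eq_card (f := (-wA24 ·)) (A := wNeg)
      (fun i hi => by simp [(mem_filter.mp hi).2])
      (fun i hi => neg_nonpos.mpr (wA24_nonneg_of_notMem_wNeg hi))
      (by rw [hNc, card_wNeg]) (by rw [hwc, card_wNeg]; norm_num)
    rw [← compl_compl N, hNj]
    exact mem_union_right _ (mem_image.mpr ⟨j, mem_filter.mpr ⟨mem_univ j, neg_eq_zero.mp hj⟩, rfl⟩)

lemma intVecs_subset_SA24 (t : ℕ) : ↑(intVecs t) ⊆ SA24 t := by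
  intro u hu
  obtain ⟨C, hC, rfl⟩ := mem_image.mp hu
  obtain ⟨hC, hCt, hCw⟩ := mem_filter.mp hC
  exact intVec_mem_SA24 (mem_powerset.mp hC) hCt hCw

lemma SA24_two : SA24 2 = intVecs 2 := by
  refine subset_antisymm (fun u hu => ?_) (intVecs_subset_SA24 2)
  obtain ⟨r, hr, m, hm, hs, hsq⟩ := exists_int_add_div_five_of_mem_SA24 hu
  have : 5 * r ≤ 2 + r ^ 2 := five_mul_le_add_sq hs hsq
  obtain rfl : r = 0 := by interval_cases r <;> omega
  exact mem_intVecs_of_mem_SA24 hu (by simpa using hm)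

lemma SA24_four : SA24 4 = ↑(intVecs 4 ∪ glueVecs) := by
  refine subset_antisymm (fun u hu => ?_) ?_
  · obtain ⟨r, hr, m, hm, hs, hsq⟩ := exists_int_add_div_five_of_mem_SA24 hu
    have : 5 * r ≤ 4 + r ^ 2 := five_mul_le_add_sq hs hsq
    obtain rfl | hr' : r = 0 ∨ r = 1 ∨ r = 4 := by interval_cases r <;> omega
    · exact mem_union_left _ (mem_intVecs_of_mem_SA24 hu (by simpa using hm))
    · have hsq' : ∑ i, m i ^ 2 = -∑ i, m i := by
        rw [hsq, hs]; rcases hr' with rfl | rfl <;> norm_num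
      exact mem_union_right _ (mem_glueVecs_of_mem_SA24 hu hr' hm
        (fun i => Int.eq_neg_one_or_zero_of_sum_sq_eq_neg_sum hsq' (mem_univ i)) hs)
  · rw [coe_union]
    exact Set.union_subset (intVecs_subset_SA24 4) glueVecs_subset_SA24

lemma card_intVecs_two : (intVecs 2).card = 16 := by decide +kernel

lemma card_intVecs_four_union_glueVecs : (intVecs 4 ∪ glueVecs).card = 70 := by decide +kernel

end NiemeierA24

/-- In the Niemeier lattice `A_24` with `w = (1^4,-1^4,0^17)`, the
quantity `η(L,w) = 1 + |S_2^w| + (1/2)|S_4^w| = 1 + 16 + 35 = 52`, which is not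
congruent to `0` modulo `8`. -/
theorem niemeierA24_eta :
    Nat.card (SA24 2) = 16 ∧
    Nat.card (SA24 4) = 70 ∧
    1 + Nat.card (SA24 2) + Nat.card (SA24 4) / 2 = 52 ∧
    ¬ (52 % 8 = 0) := by
  have h₂ : Nat.card (SA24 2) = 16 := by
    rw [NiemeierA24.SA24_two, Nat.card_coe_set_eq, Set.ncard_coe_finset,
      NiemeierA24.card_intVecs_two]
  have h₄ : Nat.card (SA24 4) = 70 := by
    rw [NiemeierA24.SA24_four, Nat.card_coe_set_eq, Set.ncard_coe_finset,
      NiemeierA24.card_intVecs_four_union_glueVecs]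
  exact ⟨h₂, h₄, by rw [h₂, h₄], by norm_num⟩
end
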